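/- arXiv:1307.3883 — 5 statements merged into one kernel-verified Lean document; each statement's English description precedes it below -/
import Mathlib

section
/- Let V be a nontrivial complex inner product space and K : V → V a conjugate-linear isometry such that K ∘ K = c • id for some scalar c ∈ ℂ. Then c = 1 or c = −1. -/
/-!
Applying `K` to `K (K v) = c • v` gives `c̄ • K v = K (K (K v)) = c • K v`, so `c` is real as soon as
`K v ≠ 0`; and since `K` is an isometry, `|c| ‖v‖ = ‖K (K v)‖ = ‖v‖` forces `|c| = 1`.
-/

theorem Complex.eq_one_or_eq_neg_one_of_conj_eq_of_norm_eq_one {c : ℂ}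
    (hconj : starRingEnd ℂ c = c) (hnorm : ‖c‖ = 1) : c = 1 ∨ c = -1 := by
  obtain ⟨r, rfl⟩ := Complex.conj_eq_iff_real.mp hconj
  rw [Complex.norm_real, Real.norm_eq_abs, abs_eq zero_le_one] at hnorm
  rcases hnorm with rfl | rfl
  · exact Or.inl Complex.ofReal_one
  · exact Or.inr (by push_cast; rfl)

theorem conj_eq_of_conjLinear_comp_self_eq_smul {V : Type*} [AddCommGroup V] [Module ℂ V]
    {K : V → V} {c : ℂ} (hKsmul : ∀ (a : ℂ) (x : V), K (a • x) = starRingEnd ℂ a • K x)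
    (hKK : ∀ v : V, K (K v) = c • v) {v : V} (hKv : K v ≠ 0) : starRingEnd ℂ c = c :=
  smul_left_injective ℂ hKv <| calc
    starRingEnd ℂ c • K v = K (c • v) := (hKsmul c v).symm
    _ = K (K (K v)) := by rw [hKK v]
    _ = c • K v := hKK (K v)

theorem norm_eq_one_of_isometry_comp_self_eq_smul {V : Type*} [NormedAddCommGroup V]
    [NormedSpace ℂ V] {K : V → V} {c : ℂ} (hKnorm : ∀ x : V, ‖K x‖ = ‖x‖)
    (hKK : ∀ v : V, K (K v) = c • v) {v : V} (hv : v ≠ 0) : ‖c‖ = 1 := by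
  have h : ‖c‖ * ‖v‖ = ‖v‖ := by rw [← norm_smul, ← hKK, hKnorm, hKnorm]
  exact (mul_eq_right₀ (norm_ne_zero_iff.mpr hv)).mp h

theorem antiunitary_square_scalar_pm_one_general
    {V : Type*} [NormedAddCommGroup V] [InnerProductSpace ℂ V] [Nontrivial V]
    (K : V → V)
    (hKsmul : ∀ (c : ℂ) (x : V), K (c • x) = (starRingEnd ℂ c) • K x)
    (hKnorm : ∀ x : V, ‖K x‖ = ‖x‖)
    (c : ℂ) (hKK : ∀ v : V, K (K v) = c • v) :
    c = 1 ∨ c = -1 := by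
  obtain ⟨v, hv⟩ := exists_ne (0 : V)
  have hKv : K v ≠ 0 := by rwa [← norm_ne_zero_iff, hKnorm, norm_ne_zero_iff]
  exact Complex.eq_one_or_eq_neg_one_of_conj_eq_of_norm_eq_one
    (conj_eq_of_conjLinear_comp_self_eq_smul hKsmul hKK hKv)
    (norm_eq_one_of_isometry_comp_self_eq_smul hKnorm hKK hv)

/-- Wigner's dichotomy: if a conjugate-linear isometry on a nontrivial complex inner
product space squares to a scalar `c • id`, then `c = 1` or `c = -1`. -/
theorem antiunitary_square_scalar_pm_one
    {V : Type*} [NormedAddCommGroup V] [InnerProductSpace ℂ V] [Nontrivial V]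
    (K : V → V)
    (hKadd : ∀ x y : V, K (x + y) = K x + K y)
    (hKsmul : ∀ (c : ℂ) (x : V), K (c • x) = (starRingEnd ℂ c) • K x)
    (hKnorm : ∀ x : V, ‖K x‖ = ‖x‖)
    (hKsurj : Function.Surjective K)
    (c : ℂ) (hKK : ∀ v : V, K (K v) = c • v) :
    c = 1 ∨ c = -1 :=
  antiunitary_square_scalar_pm_one_general K hKsmul hKnorm c hKK
end

section
/- Let V be a finite-dimensional complex inner product space, H : V → V a symmetric linear operator (⟪H x, y⟫ = ⟪x, H y⟫ for all x, y), and K : V → V a conjugate-linear isometry with K ∘ K = −id and K ∘ H = H ∘ K. Then for every λ ∈ ℝ the eigenspace {v : H v = λ • v} has even (complex) dimension. -/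
/-!
`K` preserves each eigenspace of `H` with real eigenvalue, and `(x, y) ↦ ⟪K x, y⟫` is a complex
bilinear form on it. Antiunitarity of `K` together with `K² = -1` makes it alternating, and
`⟪K x, K x⟫ = ‖x‖²` makes it nondegenerate.
The Gram matrix of a nondegenerate alternating form is invertible and skew-symmetric, which is
impossible in odd dimension since there `det A = det Aᵀ = -det A`.
-/

open Module Matrix

theorem Matrix.det_eq_zero_of_transpose_eq_neg {n R : Type*} [Fintype n] [DecidableEq n]
    [CommRing R] [NoZeroDivisors R] [NeZero (2 : R)] {A : Matrix n n R} (hA : Aᵀ = -A)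
    (hn : Odd (Fintype.card n)) : A.det = 0 := by
  have hdet : A.det = -A.det :=
    calc A.det = Aᵀ.det := (det_transpose A).symm
      _ = -A.det := by rw [hA, det_neg, hn.neg_one_pow, neg_one_mul]
  have : (2 : R) * A.det = 0 := by linear_combination hdet
  exact (mul_eq_zero.mp this).resolve_left two_ne_zero

theorem LinearMap.BilinForm.even_finrank_of_isAlt_of_nondegenerate {k W : Type*} [Field k]
    [NeZero (2 : k)] [AddCommGroup W] [Module k W] [FiniteDimensional k W]
    {B : LinearMap.BilinForm k W} (hB : B.IsAlt) (hnd : B.Nondegenerate) :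
    Even (finrank k W) := by
  by_contra hodd
  let b := finBasis k W
  have hskew : (toMatrix b B)ᵀ = -toMatrix b B := by
    ext i j
    simp only [Matrix.transpose_apply, Matrix.neg_apply, toMatrix_apply]
    exact (LinearMap.IsAlt.neg hB (b i) (b j)).symm
  refine (nondegenerate_iff_det_ne_zero b).mp hnd
    (Matrix.det_eq_zero_of_transpose_eq_neg hskew ?_)
  rwa [Fintype.card_fin, ← Nat.not_even_iff_odd]

section ConjLinear

variable {V : Type*} [NormedAddCommGroup V] [InnerProductSpace ℂ V]

theorem inner_map_map_of_conjLinear_isometry (K : V →ₗ⋆[ℂ] V) (hK : ∀ x, ‖K x‖ = ‖x‖)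
    (x y : V) : inner ℂ (K x) (K y) = inner ℂ y x := by
  let Kℝ : V →ₗ[ℝ] V :=
    { toFun := K
      map_add' := K.map_add
      map_smul' := fun r x => by simp [← Complex.coe_smul] }
  let _ := InnerProductSpace.rclikeToReal ℂ V
  have hre : ∀ x y, (inner ℂ (K x) (K y)).re = (inner ℂ x y).re :=
    (LinearMap.norm_map_iff_inner_map_map Kℝ).mp hK
  apply Complex.ext
  · rw [hre, ← inner_conj_symm, Complex.conj_re]
  · -- `im ⟪a, b⟫ = re ⟪I • a, b⟫` and `I • K x = K (-I • x)` reduce this to `hre`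
    have h := hre (-Complex.I • x) y
    rw [K.map_smulₛₗ, inner_smul_left, inner_smul_left] at h
    simp only [map_neg, Complex.conj_I, neg_neg, neg_mul, Complex.neg_re, Complex.mul_re,
      Complex.I_re, zero_mul, Complex.I_im, one_mul, zero_sub] at h
    rw [← inner_conj_symm y x, Complex.conj_im]
    linarith

theorem even_finrank_of_conjLinear_isometry_of_sq_eq_neg [FiniteDimensional ℂ V]
    (K : V →ₗ⋆[ℂ] V) (hK : ∀ x, ‖K x‖ = ‖x‖) (hKK : ∀ x, K (K x) = -x) :
    Even (finrank ℂ V) := by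
  let B : LinearMap.BilinForm ℂ V := (innerₛₗ ℂ).comp K
  have hB : ∀ x y, B x y = inner ℂ (K x) y := fun _ _ => rfl
  have halt : B.IsAlt := by
    intro x
    have h := inner_map_map_of_conjLinear_isometry K hK x (K x)
    rw [hKK, inner_neg_right, neg_eq_self] at h
    rwa [hB]
  have hsep : B.SeparatingLeft := by
    intro x hx
    have hKx : K x = 0 := inner_self_eq_zero.mp (hx (K x))
    rw [← norm_eq_zero, ← hK, hKx, norm_zero]
  exact LinearMap.BilinForm.even_finrank_of_isAlt_of_nondegenerate halt
    ((halt.isRefl.nondegenerate_iff_separatingLeft).mpr hsep)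

end ConjLinear

theorem Module.End.mapsTo_eigenspace_of_conjLinear_comm {V : Type*} [AddCommGroup V]
    [Module ℂ V] {H : Module.End ℂ V} {K : V →ₗ⋆[ℂ] V} (hKH : ∀ x, K (H x) = H (K x)) (lam : ℝ) :
    Set.MapsTo K (H.eigenspace (lam : ℂ)) (H.eigenspace (lam : ℂ)) := by
  intro v hv
  rw [SetLike.mem_coe, mem_eigenspace_iff] at hv ⊢
  rw [← hKH, hv, K.map_smulₛₗ, starRingEnd_apply, Complex.star_def, Complex.conj_ofReal]

theorem kramers_degeneracy_general
    {V : Type*} [NormedAddCommGroup V] [InnerProductSpace ℂ V] [FiniteDimensional ℂ V]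
    (H : V →ₗ[ℂ] V)
    (K : V → V)
    (hKadd : ∀ x y : V, K (x + y) = K x + K y)
    (hKsmul : ∀ (c : ℂ) (x : V), K (c • x) = (starRingEnd ℂ c) • K x)
    (hKnorm : ∀ x : V, ‖K x‖ = ‖x‖)
    (hKK : ∀ v : V, K (K v) = -v)
    (hKH : ∀ x : V, K (H x) = H (K x)) :
    ∀ lam : ℝ,
      Even (Module.finrank ℂ (Module.End.eigenspace (H : Module.End ℂ V) (lam : ℂ))) := by
  intro lam
  let Kₛ : V →ₗ⋆[ℂ] V := ⟨⟨K, hKadd⟩, hKsmul⟩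
  have hinv := Module.End.mapsTo_eigenspace_of_conjLinear_comm (K := Kₛ) hKH lam
  exact even_finrank_of_conjLinear_isometry_of_sq_eq_neg (Kₛ.restrict hinv)
    (fun x => hKnorm x) (fun x => Subtype.ext (hKK x))

/-- Kramers degeneracy: if a symmetric Hamiltonian `H` on a finite-dimensional complex
inner product space commutes with a conjugate-linear isometry `K` with `K ∘ K = -id`,
then every eigenspace of `H` (for a real eigenvalue) has even complex dimension. -/
theorem kramers_degeneracy
    {V : Type*} [NormedAddCommGroup V] [InnerProductSpace ℂ V] [FiniteDimensional ℂ V]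
    (H : V →ₗ[ℂ] V)
    (hH : ∀ x y : V, (inner ℂ (H x) y : ℂ) = inner ℂ x (H y))
    (K : V → V)
    (hKadd : ∀ x y : V, K (x + y) = K x + K y)
    (hKsmul : ∀ (c : ℂ) (x : V), K (c • x) = (starRingEnd ℂ c) • K x)
    (hKnorm : ∀ x : V, ‖K x‖ = ‖x‖)
    (hKsurj : Function.Surjective K)
    (hKK : ∀ v : V, K (K v) = -v)
    (hKH : ∀ x : V, K (H x) = H (K x)) :
    ∀ lam : ℝ,
      Even (Module.finrank ℂ (Module.End.eigenspace (H : Module.End ℂ V) (lam : ℂ))) :=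
  kramers_degeneracy_general H K hKadd hKsmul hKnorm hKK hKH
end

section
/- Let M be a group, G ⊆ M a finite subgroup, a ∈ M with a g a⁻¹ ∈ G for all g ∈ G and a² ∈ G, and χ a one-dimensional unitary character of G. Then Σ_{g ∈ G} χ((a g)²) ∈ {|G|, −|G|, 0}; i.e., every one-dimensional representation follows exactly one of the cases (a), (b), (c) with respect to the magnetic group G + aG. -/
/-! Writing `(a g)² = (a g a⁻¹)(a² g)` gives `χ((a g)²) = χ(a²) φ(g)` with
`φ(g) = χ(a g a⁻¹) χ(g)`, and `φ` is again multiplicative on `G`. Either `φ` is trivial,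
and then `χ(a²)² = φ(a²) = 1`, so the sum is `±|G|`; or `φ` is nontrivial and, as for any
nontrivial character of a finite group, `Σ φ = 0`. -/

open Finset

theorem MulHom.sum_eq_zero_of_apply_ne_one {G R : Type*} [Group G] [Fintype G]
    [CommRing R] [NoZeroDivisors R] (f : G →ₙ* R) {h : G} (hh : f h ≠ 1) :
    ∑ g : G, f g = 0 := by
  have hinv : f h * ∑ g : G, f g = ∑ g : G, f g := by
    rw [mul_sum]
    simp_rw [← map_mul]
    exact Fintype.sum_equiv (Equiv.mulLeft h) _ _ fun _ => rfl
  have hprod : (f h - 1) * ∑ g : G, f g = 0 := by rw [sub_mul, one_mul, hinv, sub_self]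
  exact (mul_eq_zero.mp hprod).resolve_left (sub_ne_zero.mpr hh)

namespace Subgroup

variable {M R : Type*} [Group M] [CommMonoid R] (G : Subgroup M) {a : M}
  (ha : ∀ g ∈ G, a * g * a⁻¹ ∈ G) {χ : M → R}
  (hχmul : ∀ g ∈ G, ∀ h ∈ G, χ (g * h) = χ g * χ h)

include ha hχmul in
def conjTwist : G →ₙ* R where
  toFun g := χ (a * g * a⁻¹) * χ g
  map_mul' g h := by
    have hconj : a * ((g : M) * h) * a⁻¹ = (a * g * a⁻¹) * (a * h * a⁻¹) := by group
    rw [coe_mul, hconj, hχmul _ (ha g g.2) _ (ha h h.2), hχmul _ g.2 _ h.2]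
    exact mul_mul_mul_comm ..

theorem conjTwist_apply (g : G) :
    conjTwist G ha hχmul g = χ (a * g * a⁻¹) * χ g := rfl

theorem map_mul_sq_eq_mul_conjTwist (ha2 : a ^ 2 ∈ G) (g : G) :
    χ ((a * g) ^ 2) = χ (a ^ 2) * conjTwist G ha hχmul g := by
  have hsq : (a * (g : M)) ^ 2 = (a * g * a⁻¹) * (a ^ 2 * g) := by rw [sq]; group
  rw [conjTwist_apply, hsq, hχmul _ (ha g g.2) _ (mul_mem ha2 g.2), hχmul _ ha2 _ g.2]
  exact mul_left_comm ..

theorem conjTwist_apply_sq (ha2 : a ^ 2 ∈ G) :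
    conjTwist G ha hχmul ⟨a ^ 2, ha2⟩ = χ (a ^ 2) ^ 2 := by
  rw [conjTwist_apply, show a * a ^ 2 * a⁻¹ = a ^ 2 by group, sq (χ _)]

end Subgroup

theorem wigner_sum_trichotomy_general
    {M : Type*} [Group M] (G : Subgroup M) [Fintype G]
    (a : M) (ha : ∀ g ∈ G, a * g * a⁻¹ ∈ G) (ha2 : a ^ 2 ∈ G)
    (χ : M → ℂ)
    (hχmul : ∀ g ∈ G, ∀ h ∈ G, χ (g * h) = χ g * χ h) :
    ∑ g : G, χ ((a * (g : M)) ^ 2) ∈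
      ({(Fintype.card G : ℂ), -(Fintype.card G : ℂ), 0} : Set ℂ) := by
  set φ := G.conjTwist ha hχmul
  have hsum : ∑ g : G, χ ((a * (g : M)) ^ 2) = χ (a ^ 2) * ∑ g : G, φ g := by
    rw [mul_sum]
    exact sum_congr rfl fun g _ => G.map_mul_sq_eq_mul_conjTwist ha hχmul ha2 g
  rw [hsum]
  by_cases htriv : ∀ g : G, φ g = 1
  · have hc : χ (a ^ 2) ^ 2 = 1 := by
      rw [← G.conjTwist_apply_sq ha hχmul ha2]
      exact htriv _
    simp only [htriv, sum_const, card_univ, nsmul_eq_mul, mul_one]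
    rcases sq_eq_one_iff.mp hc with h | h <;> simp [h]
  · obtain ⟨h, hh⟩ := not_forall.mp htriv
    simp [φ.sum_eq_zero_of_apply_ne_one hh]

/-- Every one-dimensional unitary character `χ` of the unitary subgroup `G` of a
magnetic group `G + aG` follows exactly one of Wigner's cases (a), (b), (c):
the Wigner sum `Σ_{g ∈ G} χ((a g)²)` equals `|G|`, `-|G|`, or `0`. -/
theorem wigner_sum_trichotomy
    {M : Type*} [Group M] (G : Subgroup M) [Fintype G]
    (a : M) (ha : ∀ g ∈ G, a * g * a⁻¹ ∈ G) (ha2 : a ^ 2 ∈ G)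
    (χ : M → ℂ)
    (hχmul : ∀ g ∈ G, ∀ h ∈ G, χ (g * h) = χ g * χ h)
    (hχabs : ∀ g ∈ G, ‖χ g‖ = 1) :
    ∑ g : G, χ ((a * (g : M)) ^ 2) ∈
      ({(Fintype.card G : ℂ), -(Fintype.card G : ℂ), 0} : Set ℂ) :=
  wigner_sum_trichotomy_general G a ha ha2 χ hχmul
end

section
/- Let M be a group, G ⊆ M a finite subgroup, a ∈ M with a g a⁻¹ ∈ G for all g ∈ G and a² ∈ G, and χ a one-dimensional unitary character of G. Then there exists a function d : M → ℂ with |d(m)| = 1 for all m ∈ G ∪ aG, d(g) = χ(g) for all g ∈ G, and satisfying the corepresentation multiplication rule d(m₁ m₂) = d(m₁) · d(m₂) whenever m₁ ∈ G, m₂ ∈ G ∪ aG, and d(m₁ m₂) = d(m₁) · conj(d(m₂)) whenever m₁ ∈ aG, m₂ ∈ G ∪ aG, if and only if χ(a g a⁻¹) = χ(g)⁻¹ for all g ∈ G and χ(a²) = 1. -/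
/-!
Write `d` for a corepresentation extending `χ`. The antiunitary rule gives
`d(a²) = d(a) conj(d(a)) = 1` and `d(aga) = d(a) conj(χ g) conj(d(a)) = conj(χ g) = (χ g)⁻¹`,
while `aga = (aga⁻¹) a²` is unitary, so `d(aga) = χ(aga⁻¹) χ(a²)`.
Conversely, set `d(ag) = u conj(χ g)` with `u = χ a` when `a ∈ G` (the conditions then force `χ`
to be real) and `u = 1` otherwise; the two conditions are exactly what the products
`g · ah` and `ag · ah = (aga⁻¹) a² h` need.
-/

open ComplexConjugate

namespace Magnetic

variable {M : Type*} [Group M] {G : Subgroup M} {a : M} {χ : M → ℂ}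

variable (G a) in
def magneticSet : Set M := ↑G ∪ (fun g => a * g) '' ↑G

theorem mem_magneticSet_self : a ∈ magneticSet G a := Or.inr ⟨1, G.one_mem, mul_one a⟩

theorem inv_mul_mul_mem (ha : ∀ g ∈ G, a * g * a⁻¹ ∈ G) (ha2 : a ^ 2 ∈ G) {g : M} (hg : g ∈ G) :
    a⁻¹ * g * a ∈ G := by
  rw [show a⁻¹ * g * a = (a ^ 2)⁻¹ * (a * g * a⁻¹) * a ^ 2 by group]
  exact G.mul_mem (G.mul_mem (G.inv_mem ha2) (ha g hg)) ha2

variable (G a) in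
structure IsCorepExtension (χ d : M → ℂ) : Prop where
  norm_eq_one : ∀ m ∈ magneticSet G a, ‖d m‖ = 1
  eq_on : ∀ g ∈ G, d g = χ g
  map_mul_unitary : ∀ m₁ ∈ G, ∀ m₂ ∈ magneticSet G a, d (m₁ * m₂) = d m₁ * d m₂
  map_mul_antiunitary : ∀ m₁ ∈ (fun g => a * g) '' (G : Set M), ∀ m₂ ∈ magneticSet G a,
    d (m₁ * m₂) = d m₁ * conj (d m₂)

namespace IsCorepExtension

variable {d : M → ℂ}

theorem apply_mul_conj_apply (hd : IsCorepExtension G a χ d) : d a * conj (d a) = 1 := by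
  rw [Complex.mul_conj', hd.norm_eq_one a mem_magneticSet_self]
  norm_num

theorem map_sq_eq_one (hd : IsCorepExtension G a χ d) (ha2 : a ^ 2 ∈ G) : χ (a ^ 2) = 1 := by
  rw [← hd.eq_on _ ha2, pow_two,
    hd.map_mul_antiunitary a ⟨1, G.one_mem, mul_one a⟩ a mem_magneticSet_self,
    hd.apply_mul_conj_apply]

theorem map_conj_eq_inv (hd : IsCorepExtension G a χ d) (ha : ∀ g ∈ G, a * g * a⁻¹ ∈ G)
    (ha2 : a ^ 2 ∈ G) (hχabs : ∀ g ∈ G, ‖χ g‖ = 1) {g : M} (hg : g ∈ G) :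
    χ (a * g * a⁻¹) = (χ g)⁻¹ := by
  calc χ (a * g * a⁻¹) = d (a * g * a⁻¹ * a ^ 2) := by
        rw [hd.map_mul_unitary _ (ha g hg) _ (Or.inl ha2), hd.eq_on _ (ha g hg), hd.eq_on _ ha2,
          hd.map_sq_eq_one ha2, mul_one]
    _ = d (a * g * a) := congrArg d (by group)
    _ = d a * conj (χ g) * conj (d a) := by
        rw [hd.map_mul_antiunitary _ ⟨g, hg, rfl⟩ a mem_magneticSet_self,
          hd.map_mul_antiunitary a ⟨1, G.one_mem, mul_one a⟩ g (Or.inl hg), hd.eq_on g hg]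
    _ = conj (χ g) := by linear_combination conj (χ g) * hd.apply_mul_conj_apply
    _ = (χ g)⁻¹ := (Complex.inv_eq_conj (hχabs g hg)).symm

end IsCorepExtension

theorem map_inv_mul_mul (ha : ∀ g ∈ G, a * g * a⁻¹ ∈ G) (ha2 : a ^ 2 ∈ G)
    (hc : ∀ g ∈ G, χ (a * g * a⁻¹) = (χ g)⁻¹) {g : M} (hg : g ∈ G) :
    χ (a⁻¹ * g * a) = (χ g)⁻¹ := by
  have h := hc _ (inv_mul_mul_mem ha ha2 hg)
  rw [show a * (a⁻¹ * g * a) * a⁻¹ = g by group] at h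
  rw [h, inv_inv]

theorem conj_map_eq_self_of_mem (haG : a ∈ G) (hχmul : ∀ g ∈ G, ∀ h ∈ G, χ (g * h) = χ g * χ h)
    (hχabs : ∀ g ∈ G, ‖χ g‖ = 1) (hc : ∀ g ∈ G, χ (a * g * a⁻¹) = (χ g)⁻¹) {g : M}
    (hg : g ∈ G) : conj (χ g) = χ g := by
  have hχa : χ a ≠ 0 := norm_ne_zero_iff.mp (by rw [hχabs a haG]; exact one_ne_zero)
  have hmem : a * g * a⁻¹ ∈ G := G.mul_mem (G.mul_mem haG hg) (G.inv_mem haG)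
  have h : χ (a * g * a⁻¹) * χ a = χ g * χ a := by
    rw [← hχmul _ hmem _ haG, mul_comm, ← hχmul _ haG _ hg, inv_mul_cancel_right]
  rw [← Complex.inv_eq_conj (hχabs g hg), ← hc g hg, mul_right_cancel₀ hχa h]

theorem isCorepExtension_of_apply_mul (ha : ∀ g ∈ G, a * g * a⁻¹ ∈ G) (ha2 : a ^ 2 ∈ G)
    (hχmul : ∀ g ∈ G, ∀ h ∈ G, χ (g * h) = χ g * χ h) (hχabs : ∀ g ∈ G, ‖χ g‖ = 1)
    (hc : ∀ g ∈ G, χ (a * g * a⁻¹) = (χ g)⁻¹) (hsq : χ (a ^ 2) = 1) {d : M → ℂ} {u : ℂ}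
    (hu : ‖u‖ = 1) (hdG : ∀ g ∈ G, d g = χ g) (hdaG : ∀ g ∈ G, d (a * g) = u * conj (χ g)) :
    IsCorepExtension G a χ d where
  norm_eq_one := by
    rintro m (hm | ⟨g, hg, rfl⟩)
    · rw [hdG m hm, hχabs m hm]
    · rw [hdaG g hg, norm_mul, Complex.norm_conj, hu, hχabs g hg, one_mul]
  eq_on := hdG
  map_mul_unitary := by
    rintro m₁ h₁ m₂ (h₂ | ⟨h, hh, rfl⟩)
    · rw [hdG _ (G.mul_mem h₁ h₂), hdG _ h₁, hdG _ h₂, hχmul _ h₁ _ h₂]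
    · have h₁' := inv_mul_mul_mem ha ha2 h₁
      rw [show m₁ * (a * h) = a * (a⁻¹ * m₁ * a * h) by group, hdaG _ (G.mul_mem h₁' hh),
        hdG _ h₁, hdaG _ hh, hχmul _ h₁' _ hh, map_mul, ← Complex.inv_eq_conj (hχabs _ h₁'),
        map_inv_mul_mul ha ha2 hc h₁, inv_inv]
      ring
  map_mul_antiunitary := by
    have huu : u * conj u = 1 := by rw [Complex.mul_conj', hu]; norm_num
    rintro m₁ ⟨g, hg, rfl⟩ m₂ (h₂ | ⟨h, hh, rfl⟩)
    · rw [mul_assoc, hdaG _ (G.mul_mem hg h₂), hdaG _ hg, hdG _ h₂, hχmul _ hg _ h₂, map_mul,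
        mul_assoc]
    · have hmem : a * g * a⁻¹ * a ^ 2 ∈ G := G.mul_mem (ha g hg) ha2
      rw [show a * g * (a * h) = a * g * a⁻¹ * a ^ 2 * h by group, hdG _ (G.mul_mem hmem hh),
        hχmul _ hmem _ hh, hχmul _ (ha g hg) _ ha2, hsq, mul_one, hc g hg, hdaG _ hg, hdaG _ hh,
        map_mul, Complex.conj_conj, Complex.inv_eq_conj (hχabs g hg)]
      linear_combination (-(conj (χ g) * χ h)) * huu

theorem exists_isCorepExtension (ha : ∀ g ∈ G, a * g * a⁻¹ ∈ G) (ha2 : a ^ 2 ∈ G)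
    (hχmul : ∀ g ∈ G, ∀ h ∈ G, χ (g * h) = χ g * χ h) (hχabs : ∀ g ∈ G, ‖χ g‖ = 1)
    (hc : ∀ g ∈ G, χ (a * g * a⁻¹) = (χ g)⁻¹) (hsq : χ (a ^ 2) = 1) :
    ∃ d, IsCorepExtension G a χ d := by
  classical
  by_cases haG : a ∈ G
  · refine ⟨χ, isCorepExtension_of_apply_mul ha ha2 hχmul hχabs hc hsq (hχabs a haG)
      (fun _ _ => rfl) fun g hg => ?_⟩
    rw [hχmul a haG g hg, conj_map_eq_self_of_mem haG hχmul hχabs hc hg]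
  · refine ⟨fun m => if m ∈ G then χ m else conj (χ (a⁻¹ * m)),
      isCorepExtension_of_apply_mul ha ha2 hχmul hχabs hc hsq norm_one (fun g hg => if_pos hg)
      fun g hg => ?_⟩
    have hag : a * g ∉ G := by rwa [G.mul_mem_cancel_right hg]
    simp only [hag, if_false, inv_mul_cancel_left, one_mul]

end Magnetic

theorem one_dim_corepresentation_extension_iff_general
    {M : Type*} [Group M] (G : Subgroup M)
    (a : M) (ha : ∀ g ∈ G, a * g * a⁻¹ ∈ G) (ha2 : a ^ 2 ∈ G)
    (χ : M → ℂ)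
    (hχmul : ∀ g ∈ G, ∀ h ∈ G, χ (g * h) = χ g * χ h)
    (hχabs : ∀ g ∈ G, ‖χ g‖ = 1) :
    (∃ d : M → ℂ,
        (∀ m ∈ (↑G ∪ (fun g => a * g) '' ↑G : Set M), ‖d m‖ = 1) ∧
        (∀ g ∈ G, d g = χ g) ∧
        (∀ m₁ ∈ G, ∀ m₂ ∈ (↑G ∪ (fun g => a * g) '' ↑G : Set M),
            d (m₁ * m₂) = d m₁ * d m₂) ∧
        (∀ m₁ ∈ (fun g => a * g) '' (↑G : Set M),
            ∀ m₂ ∈ (↑G ∪ (fun g => a * g) '' ↑G : Set M),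
            d (m₁ * m₂) = d m₁ * (starRingEnd ℂ) (d m₂))) ↔
      ((∀ g ∈ G, χ (a * g * a⁻¹) = (χ g)⁻¹) ∧ χ (a ^ 2) = 1) := by
  constructor
  · rintro ⟨d, hnorm, heq, hunit, hanti⟩
    have hd : Magnetic.IsCorepExtension G a χ d := ⟨hnorm, heq, hunit, hanti⟩
    exact ⟨fun g hg => hd.map_conj_eq_inv ha ha2 hχabs hg, hd.map_sq_eq_one ha2⟩
  · rintro ⟨hc, hsq⟩
    obtain ⟨d, hd⟩ := Magnetic.exists_isCorepExtension ha ha2 hχmul hχabs hc hsq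
    exact ⟨d, hd.norm_eq_one, hd.eq_on, hd.map_mul_unitary, hd.map_mul_antiunitary⟩

/-- A one-dimensional unitary character `χ` of the unitary subgroup `G` extends to a
one-dimensional corepresentation `d` of the magnetic group `G + aG` (multiplying
ordinarily after unitary elements and with conjugation of the second factor after
antiunitary elements) if and only if `χ(a g a⁻¹) = χ(g)⁻¹` for all `g ∈ G` and
`χ(a²) = 1`, i.e. exactly when `χ` follows case (a). -/
theorem one_dim_corepresentation_extension_iff
    {M : Type*} [Group M] (G : Subgroup M) [Fintype G]
    (a : M) (ha : ∀ g ∈ G, a * g * a⁻¹ ∈ G) (ha2 : a ^ 2 ∈ G)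
    (χ : M → ℂ)
    (hχmul : ∀ g ∈ G, ∀ h ∈ G, χ (g * h) = χ g * χ h)
    (hχabs : ∀ g ∈ G, ‖χ g‖ = 1) :
    (∃ d : M → ℂ,
        (∀ m ∈ (↑G ∪ (fun g => a * g) '' ↑G : Set M), ‖d m‖ = 1) ∧
        (∀ g ∈ G, d g = χ g) ∧
        (∀ m₁ ∈ G, ∀ m₂ ∈ (↑G ∪ (fun g => a * g) '' ↑G : Set M),
            d (m₁ * m₂) = d m₁ * d m₂) ∧
        (∀ m₁ ∈ (fun g => a * g) '' (↑G : Set M),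
            ∀ m₂ ∈ (↑G ∪ (fun g => a * g) '' ↑G : Set M),
            d (m₁ * m₂) = d m₁ * (starRingEnd ℂ) (d m₂))) ↔
      ((∀ g ∈ G, χ (a * g * a⁻¹) = (χ g)⁻¹) ∧ χ (a ^ 2) = 1) :=
  one_dim_corepresentation_extension_iff_general G a ha ha2 χ hχmul hχabs
end

section
/- Let M be a group, G ⊆ M a finite subgroup, a ∈ M with a g a⁻¹ ∈ G for all g ∈ G and a² ∈ G, and χ a one-dimensional unitary character of G. Then the following are equivalent: (1) Σ_{g ∈ G} χ((a g)²) = |G| and Σ_{g ∈ G} χ(g²) = 0; (2) χ(a g a⁻¹) = χ(g)⁻¹ for all g ∈ G, χ(a²) = 1, and there exists h ∈ G with χ(h) not real. -/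
/-!
Since `(a g)² = (a g a⁻¹) a² g`, every term of the first sum is a product of three complex
numbers of modulus one, so the sum equals `|G|` exactly when every term is `1`; at `g = 1`
this gives `χ(a²) = 1`, and then it says `χ(a g a⁻¹) = χ(g)⁻¹`. The second sum is the sum
over `G` of the character `χ²`, which vanishes exactly when `χ²` is nontrivial, and a
complex number `z` of modulus one has `z² = 1` exactly when `z = z⁻¹ = conj z`, i.e. when
`z` is real.
-/

namespace Complex

lemma sq_eq_one_iff_im_eq_zero_of_norm_eq_one {z : ℂ} (hz : ‖z‖ = 1) :
    z ^ 2 = 1 ↔ z.im = 0 := by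
  have hz0 : z ≠ 0 := norm_ne_zero_iff.mp (by simp [hz])
  rw [← conj_eq_iff_im, ← inv_eq_conj hz, sq, mul_eq_one_iff_inv_eq₀ hz0, eq_comm]

lemma eq_one_of_norm_eq_one_of_re_eq_one {z : ℂ} (hz : ‖z‖ = 1) (hre : z.re = 1) : z = 1 :=
  ext hre (abs_re_eq_norm.mp (by rw [hre, hz, abs_one]))

lemma sum_eq_card_iff_forall_eq_one {ι : Type*} {s : Finset ι} {f : ι → ℂ}
    (hf : ∀ i ∈ s, ‖f i‖ = 1) : ∑ i ∈ s, f i = s.card ↔ ∀ i ∈ s, f i = 1 := by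
  refine ⟨fun hs i hi => ?_, fun h => by simp [Finset.sum_congr rfl h]⟩
  have hre_sum : ∑ j ∈ s, (f j).re = ∑ j ∈ s, (1 : ℝ) := by
    simpa using congrArg re hs
  have hre_le : ∀ j ∈ s, (f j).re ≤ 1 := fun j hj => (hf j hj) ▸ re_le_norm (f j)
  exact eq_one_of_norm_eq_one_of_re_eq_one (hf i hi)
    ((Finset.sum_eq_sum_iff_of_le hre_le).mp hre_sum i hi)

end Complex

theorem MonoidHom.sum_sq_eq_zero_iff {G R : Type*} [Group G] [Fintype G] [CommRing R]
    [IsDomain R] [CharZero R] (ψ : G →* R) : ∑ g, ψ g ^ 2 = 0 ↔ ∃ g, ψ g ^ 2 ≠ 1 := by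
  classical
  have hsum := sum_hom_units ((powMonoidHom 2).comp ψ)
  have hψ : (powMonoidHom 2).comp ψ = 1 ↔ ∀ g, ψ g ^ 2 = 1 := DFunLike.ext_iff
  simp only [comp_apply, powMonoidHom_apply] at hsum
  rw [hsum]
  split_ifs with h1
  · simp [hψ.mp h1, Fintype.card_ne_zero]
  · simpa [hψ] using h1

namespace Subgroup

variable {M : Type*} [Group M] (G : Subgroup M)

def restrictChar (χ : M → ℂ) (hmul : ∀ g ∈ G, ∀ h ∈ G, χ (g * h) = χ g * χ h)
    (habs : ∀ g ∈ G, ‖χ g‖ = 1) : G →* ℂ where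
  toFun g := χ g
  map_one' := by
    have h1 : χ 1 ≠ 0 := norm_ne_zero_iff.mp (by simp [habs 1 G.one_mem])
    simpa [h1] using hmul 1 G.one_mem 1 G.one_mem
  map_mul' g h := hmul g g.2 h h.2

theorem sum_map_mul_sq_eq_card_iff [Fintype G] {a : M} (ha : ∀ g ∈ G, a * g * a⁻¹ ∈ G)
    (ha2 : a ^ 2 ∈ G) (χ : M → ℂ) (hmul : ∀ g ∈ G, ∀ h ∈ G, χ (g * h) = χ g * χ h)
    (habs : ∀ g ∈ G, ‖χ g‖ = 1) :
    ∑ g : G, χ ((a * g) ^ 2) = Fintype.card G ↔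
      (∀ g ∈ G, χ (a * g * a⁻¹) = (χ g)⁻¹) ∧ χ (a ^ 2) = 1 := by
  have hterm : ∀ g ∈ G, χ ((a * g) ^ 2) = χ (a * g * a⁻¹) * χ (a ^ 2) * χ g := by
    intro g hg
    rw [show (a * g) ^ 2 = a * g * a⁻¹ * a ^ 2 * g by rw [sq]; group,
      hmul _ (mul_mem (ha g hg) ha2) _ hg, hmul _ (ha g hg) _ ha2]
  have hone : χ 1 = 1 := (G.restrictChar χ hmul habs).map_one
  rw [← Finset.card_univ, Complex.sum_eq_card_iff_forall_eq_one fun g _ => by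
    simp [hterm g g.2, habs _ (ha g g.2), habs _ ha2, habs g g.2]]
  simp only [Finset.mem_univ, forall_const, Subtype.forall, hterm _ (Subtype.prop _)]
  constructor
  · intro h
    have ha2one : χ (a ^ 2) = 1 := by simpa [hone] using h 1 G.one_mem
    refine ⟨fun g hg => eq_inv_of_mul_eq_one_left ?_, ha2one⟩
    simpa [ha2one] using h g hg
  · rintro ⟨hconj, ha2one⟩ g hg
    have hg0 : χ g ≠ 0 := norm_ne_zero_iff.mp (by simp [habs g hg])
    rw [hconj g hg, ha2one, mul_one, inv_mul_cancel₀ hg0]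

end Subgroup

/-- Specialization of the paper's Theorem 1 to one-dimensional representations: the
Wigner sum with respect to the magnetic group `G + aG` equals `|G|` (case (a)) and the
Wigner sum with respect to `G + KG` (pure time inversion) equals `0` (case (c)) if and
only if `χ(a g a⁻¹) = χ(g)⁻¹` for all `g ∈ G`, `χ(a²) = 1`, and `χ` takes some
non-real value on `G`. -/
theorem theorem1_one_dim_characterization
    {M : Type*} [Group M] (G : Subgroup M) [Fintype G]
    (a : M) (ha : ∀ g ∈ G, a * g * a⁻¹ ∈ G) (ha2 : a ^ 2 ∈ G)
    (χ : M → ℂ)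
    (hχmul : ∀ g ∈ G, ∀ h ∈ G, χ (g * h) = χ g * χ h)
    (hχabs : ∀ g ∈ G, ‖χ g‖ = 1) :
    (∑ g : G, χ ((a * (g : M)) ^ 2) = (Fintype.card G : ℂ) ∧
        ∑ g : G, χ (((g : M)) ^ 2) = 0) ↔
      ((∀ g ∈ G, χ (a * g * a⁻¹) = (χ g)⁻¹) ∧ χ (a ^ 2) = 1 ∧
        ∃ h ∈ G, (χ h).im ≠ 0) := by
  set ψ := G.restrictChar χ hχmul hχabs
  have hsq : ∑ g : G, χ ((g : M) ^ 2) = ∑ g, ψ g ^ 2 := by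
    simp only [← map_pow]
    rfl
  have hψ_sq : ∀ g : G, ψ g ^ 2 ≠ 1 ↔ (χ g).im ≠ 0 := fun g =>
    (Complex.sq_eq_one_iff_im_eq_zero_of_norm_eq_one (hχabs g g.2)).not
  rw [G.sum_map_mul_sq_eq_card_iff ha ha2 χ hχmul hχabs, hsq, ψ.sum_sq_eq_zero_iff, and_assoc]
  simp only [hψ_sq, Subtype.exists, exists_prop]
end
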